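/- Let ω : 𝒜 → ℂ⟦λ⟧ be a state on a unital *-algebra 𝒜 over ℂ⟦λ⟧, and for a ∈ 𝒜 let Var_ω(a) = ω((a − ω(a)·1)* (a − ω(a)·1)) denote the variance. Then for all Hermitean elements f = f* and g = g* of 𝒜 the uncertainty relation 4 · Var_ω(f) · Var_ω(g) ≥ ω([f,g]) · (ω([f,g]))* holds in the ordered ring ℝ⟦λ⟧, where [f,g] = fg − gf is the commutator. -/

import Mathlib

/-- The involution on `ℂ⟦λ⟧`: coefficientwise complex conjugation (`λ` is real). -/
noncomputable def conjPS : PowerSeries ℂ →+* PowerSeries ℂ :=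
  PowerSeries.map (starRingEnd ℂ)

/-- A real formal power series is positive if it is nonzero and its lowest nonvanishing
coefficient is strictly positive. -/
noncomputable def PosR (a : PowerSeries ℝ) : Prop :=
  a ≠ 0 ∧ 0 < PowerSeries.coeff a.order.toNat a

/-- The order of `ℝ⟦λ⟧ ⊆ ℂ⟦λ⟧`: `x ≤ y` iff `y - x` lies in the subring `ℝ⟦λ⟧`
(i.e. comes from a real series) and is zero or positive there. -/
noncomputable def leR (x y : PowerSeries ℂ) : Prop :=
  ∃ d : PowerSeries ℝ, y - x = PowerSeries.map (algebraMap ℝ ℂ) d ∧ (d = 0 ∨ PosR d)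

/-- The variance of `a` in the state `ω`: `Var_ω(a) = ω((a - ω(a)·1)* (a - ω(a)·1))`. -/
noncomputable def Var {𝒜 : Type*} [Ring 𝒜] [Algebra (PowerSeries ℂ) 𝒜] [StarRing 𝒜]
    (ω : 𝒜 →ₗ[PowerSeries ℂ] PowerSeries ℂ) (a : 𝒜) : PowerSeries ℂ :=
  ω (star (a - ω a • (1 : 𝒜)) * (a - ω a • (1 : 𝒜)))

/-
Replacing `f`, `g` by `F = f - ω(f)`, `G = g - ω(g)` changes neither the commutator nor, as
`ω(f)` is real, hermiticity, and turns the variances into `ω(F²)`, `ω(G²)`. For real series `x`,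
`y` positivity of `ω` on `(xF + iyG)* (xF + iyG)` says that the quadratic form
`x² ω(F²) + x y · iω([F,G]) + y² ω(G²)` is nonnegative on `ℝ⟦λ⟧`, so its discriminant is
nonpositive; and `(iω([F,G]))² = ω([F,G]) · ω([F,G])*`. The order of `ℝ⟦λ⟧` is the
lexicographic order of Hahn series, which makes it a linearly ordered commutative ring.
-/

open PowerSeries

noncomputable def toLexHahn : PowerSeries ℝ ≃+* Lex (HahnSeries ℕ ℝ) :=
  HahnSeries.toPowerSeries.symm.trans
    { toLex with map_mul' := fun _ _ => rfl, map_add' := fun _ _ => rfl }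

@[simp]
lemma coeff_ofLex_toLexHahn (d : PowerSeries ℝ) (n : ℕ) :
    (ofLex (toLexHahn d)).coeff n = coeff n d := rfl

lemma posR_iff_exists (d : PowerSeries ℝ) :
    PosR d ↔ ∃ k, (∀ j < k, coeff j d = 0) ∧ 0 < coeff k d := by
  constructor
  · rintro ⟨hd, hk⟩
    have hfin : (d.order.toNat : ℕ∞) = d.order := ENat.natCast_toNat (order_eq_top.not.2 hd)
    exact ⟨_, fun j hj => coeff_of_lt_order j (hfin ▸ by exact_mod_cast hj), hk⟩
  · rintro ⟨k, hlt, hk⟩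
    have hne : d ≠ 0 := fun h => by simp [h] at hk
    rw [PosR, order_eq_nat.2 ⟨hk.ne', hlt⟩, ENat.toNat_natCast]
    exact ⟨hne, hk⟩

lemma posR_iff (d : PowerSeries ℝ) : PosR d ↔ 0 < toLexHahn d := by
  simp [posR_iff_exists, HahnSeries.lt_iff, eq_comm]

noncomputable def ofRealPS : PowerSeries ℝ →+* PowerSeries ℂ :=
  PowerSeries.map (algebraMap ℝ ℂ)

lemma ofRealPS_injective : Function.Injective ofRealPS :=
  PowerSeries.map_injective _ (algebraMap ℝ ℂ).injective

@[simp]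
lemma conjPS_ofRealPS (d : PowerSeries ℝ) : conjPS (ofRealPS d) = ofRealPS d := by
  ext n
  simp [conjPS, ofRealPS, coeff_map]

@[simp]
lemma conjPS_C_I : conjPS (C Complex.I) = -C Complex.I := by
  simp [conjPS]

lemma C_I_mul_C_I : C Complex.I * C Complex.I = -1 := by
  rw [← map_mul, Complex.I_mul_I, map_neg, map_one]

lemma mul_conjPS_eq_of_C_I_mul_eq {c : PowerSeries ℂ} {b : PowerSeries ℝ}
    (hb : C Complex.I * c = ofRealPS b) : c * conjPS c = ofRealPS (b * b) := by
  have hconj : -C Complex.I * conjPS c = C Complex.I * c := by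
    have := congrArg conjPS hb
    rwa [conjPS_ofRealPS, ← hb, map_mul, conjPS_C_I] at this
  rw [map_mul]
  linear_combination (c * C Complex.I) * hconj + (c * conjPS c) * C_I_mul_C_I +
    (C Complex.I * c + ofRealPS b) * hb

lemma leR_iff (x y : PowerSeries ℂ) :
    leR x y ↔ ∃ d, y - x = ofRealPS d ∧ 0 ≤ toLexHahn d := by
  simp only [leR, ofRealPS, posR_iff, le_iff_eq_or_lt, eq_comm (b := toLexHahn _),
    EmbeddingLike.map_eq_zero_iff]

lemma leR_ofRealPS_iff (u v : PowerSeries ℝ) :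
    leR (ofRealPS u) (ofRealPS v) ↔ toLexHahn u ≤ toLexHahn v := by
  rw [leR_iff, ← sub_nonneg, ← map_sub, ← map_sub]
  exact ⟨fun ⟨d, hd, hd0⟩ => ofRealPS_injective hd ▸ hd0, fun h => ⟨v - u, rfl, h⟩⟩

lemma exists_ofRealPS_of_leR_zero {x : PowerSeries ℂ} (h : leR 0 x) :
    ∃ d, x = ofRealPS d ∧ 0 ≤ toLexHahn d := by
  simpa only [leR_iff, sub_zero] using h

/- Without division, the discriminant bound comes from evaluating the form at
`(b, -2p)`, `(-2r, b)` and `(-b, 1)`, which give `p (4pr - b²)`, `r (4pr - b²)` and `-b²`. -/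
theorem sq_le_four_mul_of_forall_quadratic_nonneg {R : Type*} [CommRing R] [LinearOrder R]
    [IsStrictOrderedRing R] {p b r : R} (h : ∀ x y, 0 ≤ x * x * p + x * y * b + y * y * r) :
    b * b ≤ 4 * p * r := by
  have hp : 0 ≤ p := by simpa using h 1 0
  have hr : 0 ≤ r := by simpa using h 0 1
  rcases hp.lt_or_eq with hp | rfl
  · nlinarith [h b (-2 * p)]
  rcases hr.lt_or_eq with hr | rfl
  · nlinarith [h (-2 * r) b]
  · nlinarith [h (-b) 1]

theorem commutator_sub_smul_one {R A : Type*} [CommRing R] [Ring A] [Algebra R A]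
    (a b : A) (s t : R) :
    (a - s • 1) * (b - t • 1) - (b - t • 1) * (a - s • 1) = a * b - b * a := by
  simp only [sub_mul, mul_sub, smul_mul_assoc, mul_smul_comm, one_mul, mul_one, smul_sub,
    smul_smul, mul_comm s t]
  abel

section PositiveFunctional

variable {𝒜 : Type*} [Ring 𝒜] [Algebra (PowerSeries ℂ) 𝒜] [StarRing 𝒜]

lemma star_smul_add_smul_mul_self
    (hantilinear : ∀ (c : PowerSeries ℂ) (a : 𝒜), star (c • a) = conjPS c • star a)
    {F G : 𝒜} (hF : star F = F) (hG : star G = G) (u v : PowerSeries ℂ) :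
    star (u • F + v • G) * (u • F + v • G) = (conjPS u * u) • (F * F) +
      (conjPS u * v) • (F * G) + (conjPS v * u) • (G * F) + (conjPS v * v) • (G * G) := by
  simp only [star_add, hantilinear, hF, hG, add_mul, mul_add, smul_mul_smul_comm]
  abel

variable {ω : 𝒜 →ₗ[PowerSeries ℂ] PowerSeries ℂ}

/- `ω(h)` is real because `ω((1 + h)* (1 + h)) = ω(1) + 2 ω(h) + ω(h* h)` is. -/
lemma conjPS_apply_of_star_eq (hpos : ∀ a : 𝒜, leR 0 (ω (star a * a))) {h : 𝒜}
    (hh : star h = h) : conjPS (ω h) = ω h := by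
  have hreal (a : 𝒜) : conjPS (ω (star a * a)) = ω (star a * a) := by
    obtain ⟨d, hd, -⟩ := exists_ofRealPS_of_leR_zero (hpos a)
    rw [hd, conjPS_ofRealPS]
  have h1 := hreal 1
  have hh2 := hreal h
  have h1h := hreal (1 + h)
  simp only [star_add, star_one, hh, one_mul, mul_one, add_mul, mul_add, map_add] at h1 hh2 h1h
  have h2 : (2 : PowerSeries ℂ) * conjPS (ω h) = 2 * ω h := by linear_combination h1h - h1 - hh2
  exact mul_left_cancel₀ (fun h0 => by simpa [map_ofNat] using congrArg constantCoeff h0) h2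

lemma robertson_inequality
    (hantilinear : ∀ (c : PowerSeries ℂ) (a : 𝒜), star (c • a) = conjPS c • star a)
    (hpos : ∀ a : 𝒜, leR 0 (ω (star a * a))) {F G : 𝒜} (hF : star F = F) (hG : star G = G) :
    leR (ω (F * G - G * F) * conjPS (ω (F * G - G * F))) (4 * ω (F * F) * ω (G * G)) := by
  set c := ω (F * G - G * F)
  obtain ⟨p, hp, -⟩ := exists_ofRealPS_of_leR_zero (hF ▸ hpos F)
  obtain ⟨r, hr, -⟩ := exists_ofRealPS_of_leR_zero (hG ▸ hpos G)
  have hquad (x y : PowerSeries ℝ) :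
      ω (star (ofRealPS x • F + (C Complex.I * ofRealPS y) • G) *
        (ofRealPS x • F + (C Complex.I * ofRealPS y) • G)) =
      ofRealPS x * ofRealPS x * ofRealPS p + ofRealPS x * ofRealPS y * (C Complex.I * c) +
        ofRealPS y * ofRealPS y * ofRealPS r := by
    rw [star_smul_add_smul_mul_self hantilinear hF hG]
    simp only [map_add, map_smul, smul_eq_mul, map_mul, conjPS_ofRealPS, conjPS_C_I, c, map_sub,
      ← hp, ← hr]
    linear_combination -(ofRealPS y * ofRealPS y * ω (G * G)) * C_I_mul_C_I
  obtain ⟨q, hq, -⟩ := exists_ofRealPS_of_leR_zero (hquad 1 1 ▸ hpos _)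
  obtain ⟨b, hb⟩ : ∃ b, C Complex.I * c = ofRealPS b := ⟨q - p - r, by
    simp only [map_one, one_mul, map_sub] at hq ⊢; linear_combination hq⟩
  have hform (x y : PowerSeries ℝ) : 0 ≤ toLexHahn (x * x * p + x * y * b + y * y * r) := by
    have := hpos (ofRealPS x • F + (C Complex.I * ofRealPS y) • G)
    rw [hquad, hb] at this
    simp only [← map_mul, ← map_add] at this
    rwa [← map_zero ofRealPS, leR_ofRealPS_iff, map_zero] at this
  have hdisc := sq_le_four_mul_of_forall_quadratic_nonneg (p := toLexHahn p) (b := toLexHahn b)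
    (r := toLexHahn r) (toLexHahn.surjective.forall₂.2 fun x y => by simpa using hform x y)
  rw [mul_conjPS_eq_of_C_I_mul_eq hb, hp, hr, ← map_ofNat ofRealPS 4, ← map_mul, ← map_mul,
    leR_ofRealPS_iff]
  simpa [map_ofNat] using hdisc

end PositiveFunctional

theorem stmt4_general {𝒜 : Type*} [Ring 𝒜] [Algebra (PowerSeries ℂ) 𝒜] [StarRing 𝒜]
    (hantilinear : ∀ (c : PowerSeries ℂ) (a : 𝒜), star (c • a) = conjPS c • star a)
    (ω : 𝒜 →ₗ[PowerSeries ℂ] PowerSeries ℂ)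
    (hpos : ∀ a : 𝒜, leR 0 (ω (star a * a)))
    (f g : 𝒜) (hf : star f = f) (hg : star g = g) :
    leR (ω (f * g - g * f) * conjPS (ω (f * g - g * f)))
      (4 * Var ω f * Var ω g) := by
  have hcentered {h : 𝒜} (hh : star h = h) : star (h - ω h • 1) = h - ω h • 1 := by
    rw [star_sub, hantilinear, star_one, hh, conjPS_apply_of_star_eq hpos hh]
  have := robertson_inequality hantilinear hpos (hcentered hf) (hcentered hg)
  rw [commutator_sub_smul_one] at this
  rwa [Var, Var, hcentered hf, hcentered hg]

/-- Uncertainty relation: if `ω` is a state on a unital `*`-algebra `𝒜` over `ℂ⟦λ⟧`,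
then for Hermitean `f`, `g` one has
`4 · Var_ω(f) · Var_ω(g) ≥ ω([f,g]) · (ω([f,g]))*` in the ordered ring `ℝ⟦λ⟧`. -/
theorem stmt4 {𝒜 : Type*} [Ring 𝒜] [Algebra (PowerSeries ℂ) 𝒜] [StarRing 𝒜]
    (hantilinear : ∀ (c : PowerSeries ℂ) (a : 𝒜), star (c • a) = conjPS c • star a)
    (ω : 𝒜 →ₗ[PowerSeries ℂ] PowerSeries ℂ)
    (hpos : ∀ a : 𝒜, leR 0 (ω (star a * a)))
    (hnormalized : ω 1 = 1)
    (f g : 𝒜) (hf : star f = f) (hg : star g = g) :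
    leR (ω (f * g - g * f) * conjPS (ω (f * g - g * f)))
      (4 * Var ω f * Var ω g) :=
  stmt4_general hantilinear ω hpos f g hf hg
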